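/- arXiv:2111.00733 — 7 statements merged into one kernel-verified Lean document; each statement's English description precedes it below -/
import Mathlib

section
/- Let f : E → F be a homomorphism of locally free sheaves of rank r on a scheme X such that the induced map Λ^r f : Λ^r E → Λ^r F on top exterior powers is injective. Then f is injective. -/
/-!
Writing `d = bN.det (f ∘ bM)` for the determinant of the matrix `A` of `f`, the map `Λ^r f`
sends the generator `bM 0 ∧ ⋯ ∧ bM (r-1)` of `Λ^r M` to `d • (bN 0 ∧ ⋯ ∧ bN (r-1))`. That
generator has zero annihilator (the determinant form of `bM` takes it to `1`), so injectivity
of `Λ^r f` forces `d` to be a non-zero-divisor. Multiplying `A v = 0` by the adjugate of `A`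
gives `d • v = 0`, hence `v = 0`.
-/

open Module
open scoped nonZeroDivisors

theorem AlternatingMap.map_eq_basis_det_smul {R M P ι : Type*} [CommRing R]
    [AddCommGroup M] [Module R M] [AddCommGroup P] [Module R P]
    [Fintype ι] [DecidableEq ι] (e : Basis ι R M) (g : M [⋀^ι]→ₗ[R] P) (v : ι → M) :
    g v = e.det v • g e := by
  have hg : g = (LinearMap.toSpanSingleton R P (g e)).compAlternatingMap e.det := by
    refine e.ext_alternating fun i hi => ?_
    let σ : Equiv.Perm ι := Equiv.ofBijective i (Finite.injective_iff_bijective.1 hi)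
    rw [show (fun j => e (i j)) = e ∘ σ from rfl]
    simp [AlternatingMap.map_perm, Basis.det_self]
  rw [hg]
  simp [Basis.det_self]

namespace ExteriorAlgebra

variable {R M N : Type*} [CommRing R] [AddCommGroup M] [Module R M]
  [AddCommGroup N] [Module R N] {n : ℕ}

theorem map_ιMulti_basis (bM : Basis (Fin n) R M) (bN : Basis (Fin n) R N) (f : M →ₗ[R] N) :
    map f (ιMulti R n bM) = bN.det (f ∘ bM) • ιMulti R n bN := by
  rw [map_apply_ιMulti, AlternatingMap.map_eq_basis_det_smul bN]

theorem smul_ιMulti_basis_eq_zero_iff (b : Basis (Fin n) R M) {c : R} :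
    c • ιMulti R n b = 0 ↔ c = 0 := by
  refine ⟨fun h => ?_, fun h => by rw [h, zero_smul]⟩
  have := congrArg (liftAlternating (Function.update 0 n b.det)) h
  rwa [map_smul, map_zero, liftAlternating_apply_ιMulti, Function.update_self,
    Basis.det_self, smul_eq_mul, mul_one] at this

theorem det_comp_basis_mem_nonZeroDivisors_of_injOn (bM : Basis (Fin n) R M)
    (bN : Basis (Fin n) R N) {f : M →ₗ[R] N}
    (hf : Set.InjOn (map f) (⋀[R]^n M : Submodule R (ExteriorAlgebra R M))) :
    bN.det (f ∘ bM) ∈ R⁰ := by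
  refine mem_nonZeroDivisors_iff_right.2 fun c hc => ?_
  have hmem : c • ιMulti R n bM ∈ (⋀[R]^n M : Submodule R (ExteriorAlgebra R M)) :=
    Submodule.smul_mem _ _ (ιMulti_range R n (Set.mem_range_self _))
  have hzero : c • ιMulti R n bM = 0 := hf hmem (Submodule.zero_mem _) <| by
    rw [map_smul, map_ιMulti_basis bM bN, smul_smul, hc, zero_smul, map_zero]
  exact (smul_ιMulti_basis_eq_zero_iff bM).1 hzero

end ExteriorAlgebra

theorem LinearMap.injective_of_det_comp_basis_mem_nonZeroDivisors {R M N ι : Type*}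
    [CommRing R] [AddCommGroup M] [Module R M] [AddCommGroup N] [Module R N]
    [Fintype ι] [DecidableEq ι] (bM : Basis ι R M) (bN : Basis ι R N) {f : M →ₗ[R] N}
    (hf : bN.det (f ∘ bM) ∈ R⁰) : Function.Injective f := by
  have hdet : (toMatrix bM bN f).det = bN.det (f ∘ bM) := by
    rw [Basis.det_apply]
    congr 1
    ext i j
    rw [Basis.toMatrix_apply, toMatrix_apply, Function.comp_apply]
  intro x y hxy
  apply bM.equivFun.injective
  apply Matrix.mulVec_injective_of_det_mem_nonZeroDivisors (hdet ▸ hf)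
  simp only [Basis.equivFun_apply, toMatrix_mulVec_repr, hxy]

theorem su12_exterior_power_injective_of_top_injective
    {R M N : Type*} [CommRing R]
    [AddCommGroup M] [Module R M] [AddCommGroup N] [Module R N]
    (r : ℕ) (bM : Module.Basis (Fin r) R M) (bN : Module.Basis (Fin r) R N)
    (f : M →ₗ[R] N)
    (hΛ : Set.InjOn (ExteriorAlgebra.map f) (⋀[R]^r M : Submodule R (ExteriorAlgebra R M))) :
    Function.Injective f :=
  LinearMap.injective_of_det_comp_basis_mem_nonZeroDivisors bM bN
    (ExteriorAlgebra.det_comp_basis_mem_nonZeroDivisors_of_injOn bM bN hΛ)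
end

section
/- Let R₀ be a discrete valuation ring over ℂ with uniformizer ζ, R₁ a commutative local ℂ-algebra, and R = R₀ ⊗_ℂ R₁. If φ ∈ End_R(R⊕R) is an R-linear endomorphism of R² with det φ = ζ ⊗ 1, then there exist P, Q ∈ Aut_R(R⊕R) such that P·φ·Q equals the diagonal matrix diag(1, ζ⊗1). -/
/-!
Some entry of `φ` is a unit modulo `z = ζ ⊗ 1`. Otherwise write `φ = N + z K`, where `N` is
the lift of `φ mod z` along the section `R₁ → R`; then `det N` lifts `det φ mod z = 0`, so
`z = det φ = z (c + z det K)` with `c` in the preimage of the maximal ideal of `R₁`, which also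
contains `z`, and cancelling the non-zero-divisor `z` puts `1` in that ideal.

An entry that is a unit modulo `z = det φ` makes its row unimodular, and a matrix whose first row
`(a, b)` satisfies `u a + v b = 1` is reduced to `diag(1, det φ)` by the column operation
`!![u, -b; v, a]` followed by one row operation.
-/

open TensorProduct

namespace Matrix

variable {R : Type*} [CommRing R]

theorem exists_isUnit_mul_fin_two_mul_eq_diagonal {a b : R} (c d : R) (h : IsCoprime a b) :
    ∃ P Q : Matrix (Fin 2) (Fin 2) R,
      IsUnit P ∧ IsUnit Q ∧ P * !![a, b; c, d] * Q = diagonal ![1, a * d - b * c] := by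
  obtain ⟨u, v, huv⟩ := h
  refine ⟨!![1, 0; -(c * u + d * v), 1], !![u, -b; v, a], ?_, ?_, ?_⟩
  · simp [isUnit_iff_isUnit_det, det_fin_two_of]
  · rw [isUnit_iff_isUnit_det, det_fin_two_of]
    convert isUnit_one
    linear_combination huv
  · simp only [mul_fin_two, diagonal_vec2, EmbeddingLike.apply_eq_iff_eq, vecCons_inj, and_true]
    refine ⟨⟨?_, ?_⟩, ?_, ?_⟩
    · linear_combination huv
    · ring
    · linear_combination -(c * u + d * v) * huv
    · ring

theorem exists_isUnit_mul_mul_eq_diagonal_of_isCoprime (M : Matrix (Fin 2) (Fin 2) R)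
    (i : Fin 2) (h : IsCoprime (M i 0) (M i 1)) :
    ∃ P Q : Matrix (Fin 2) (Fin 2) R,
      IsUnit P ∧ IsUnit Q ∧ P * M * Q = diagonal ![1, M.det] := by
  match i with
  | 0 =>
    rw [det_fin_two, eta_fin_two M]
    exact exists_isUnit_mul_fin_two_mul_eq_diagonal _ _ h
  | 1 =>
    set S : Matrix (Fin 2) (Fin 2) R := !![0, 1; -1, 0]
    have hSM : S * M = !![M 1 0, M 1 1; -M 0 0, -M 0 1] := by
      ext i j
      fin_cases i <;> fin_cases j <;> simp [S, mul_apply]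
    obtain ⟨P, Q, hP, hQ, hPQ⟩ := exists_isUnit_mul_fin_two_mul_eq_diagonal (-M 0 0) (-M 0 1) h
    refine ⟨P * S, Q, hP.mul ((isUnit_iff_isUnit_det S).2 (by simp [S])), hQ, ?_⟩
    rw [Matrix.mul_assoc P, hSM, hPQ, det_fin_two]
    congr 3
    ring

theorem isCoprime_row_of_isCoprime_det (M : Matrix (Fin 2) (Fin 2) R) {i j : Fin 2}
    (h : IsCoprime (M i j) M.det) : IsCoprime (M i 0) (M i 1) := by
  obtain ⟨u, v, huv⟩ := h
  rw [det_fin_two] at huv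
  match i, j with
  | 0, 0 => exact ⟨u + v * M 1 1, -(v * M 1 0), by linear_combination huv⟩
  | 0, 1 => exact ⟨v * M 1 1, u - v * M 1 0, by linear_combination huv⟩
  | 1, 0 => exact ⟨u - v * M 0 1, v * M 0 0, by linear_combination huv⟩
  | 1, 1 => exact ⟨-(v * M 0 1), u + v * M 0 0, by linear_combination huv⟩

end Matrix

section

variable {R S : Type*} [CommRing R] [CommRing S]

theorem isCoprime_of_isUnit_map {ψ : R →+* S} (hψ : Function.Surjective ψ) {z : R}
    (hker : RingHom.ker ψ ≤ Ideal.span {z}) {x : R} (hx : IsUnit (ψ x)) : IsCoprime x z := by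
  obtain ⟨y, hy⟩ := hψ hx.unit⁻¹.1
  obtain ⟨w, hw⟩ := Ideal.mem_span_singleton'.1 <| hker (show x * y - 1 ∈ RingHom.ker ψ by
    simp [hy])
  exact ⟨y, -w, by linear_combination -hw⟩

theorem exists_isUnit_map_apply_of_det_eq [IsLocalRing S] {ψ : R →+* S} {s : S →+* R}
    (hs : Function.LeftInverse ψ s) {z : R} (hker : RingHom.ker ψ = Ideal.span {z})
    (hz : z ∈ nonZeroDivisors R) {M : Matrix (Fin 2) (Fin 2) R} (hM : M.det = z) :
    ∃ i j, IsUnit (ψ (M i j)) := by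
  by_contra! h
  set I := (IsLocalRing.maximalIdeal S).comap ψ
  set N := (s.comp ψ).mapMatrix M
  have hz0 : ψ z = 0 := by
    rw [← RingHom.mem_ker, hker]
    exact Ideal.mem_span_singleton_self z
  have hNI : ∀ i j, N i j ∈ I := fun i j => by simpa [I, N, hs _] using h i j
  have hzI : z ∈ I := by simp [I, hz0]
  have hdetN : N.det = 0 := by
    rw [← RingHom.map_det, hM]
    simp [hz0]
  have hlift : ∀ i j, ∃ k, M i j = N i j + z * k := fun i j => by
    have hMN : M i j - N i j ∈ RingHom.ker ψ := by simp [N, hs _]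
    obtain ⟨k, hk⟩ := Ideal.mem_span_singleton.1 (hker ▸ hMN)
    exact ⟨k, by linear_combination hk⟩
  choose K hK using hlift
  have hexpand : z * 1 = z * (N 0 0 * K 1 1 + K 0 0 * N 1 1 - N 0 1 * K 1 0 - K 0 1 * N 1 0
      + z * (K 0 0 * K 1 1 - K 0 1 * K 1 0)) := by
    nth_rewrite 1 [mul_one, ← hM]
    rw [Matrix.det_fin_two, hK 0 0, hK 0 1, hK 1 0, hK 1 1]
    rw [Matrix.det_fin_two] at hdetN
    linear_combination hdetN
  have h1 : (1 : R) ∈ I := by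
    rw [(mul_cancel_left_mem_nonZeroDivisors hz).1 hexpand]
    exact I.add_mem (I.sub_mem (I.sub_mem (I.add_mem (I.mul_mem_right _ (hNI 0 0))
      (I.mul_mem_left _ (hNI 1 1))) (I.mul_mem_right _ (hNI 0 1))) (I.mul_mem_left _ (hNI 1 0)))
      (I.mul_mem_right _ hzI)
  exact Ideal.comap_ne_top ψ (IsLocalRing.maximalIdeal.isMaximal S).ne_top
    ((Ideal.eq_top_iff_one I).2 h1)

end

theorem smith_form_lemma_general
    (R₀ R₁ : Type*) [CommRing R₀]
    [CommRing R₁] [IsLocalRing R₁]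
    [Algebra ℂ R₀] [Algebra ℂ R₁]
    (ζ : R₀)
    (ψ : (R₀ ⊗[ℂ] R₁) →+* R₁)
    (hψ : ∀ r : R₁, ψ ((1 : R₀) ⊗ₜ[ℂ] r) = r)
    (hker : RingHom.ker ψ = Ideal.span {ζ ⊗ₜ[ℂ] (1 : R₁)})
    (hnzd : (ζ ⊗ₜ[ℂ] (1 : R₁)) ∈ nonZeroDivisors (R₀ ⊗[ℂ] R₁))
    (φ : Matrix (Fin 2) (Fin 2) (R₀ ⊗[ℂ] R₁))
    (hdet : φ.det = ζ ⊗ₜ[ℂ] (1 : R₁)) :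
    ∃ P Q : Matrix (Fin 2) (Fin 2) (R₀ ⊗[ℂ] R₁),
      IsUnit P ∧ IsUnit Q ∧
      P * φ * Q = Matrix.diagonal ![1, ζ ⊗ₜ[ℂ] (1 : R₁)] := by
  have hs : Function.LeftInverse ψ (Algebra.TensorProduct.includeRight : R₁ →ₐ[ℂ] _) := hψ
  obtain ⟨i, j, hunit⟩ := exists_isUnit_map_apply_of_det_eq hs hker hnzd hdet
  have hcop : IsCoprime (φ i j) φ.det :=
    hdet ▸ isCoprime_of_isUnit_map hs.surjective hker.le hunit
  rw [← hdet]
  exact φ.exists_isUnit_mul_mul_eq_diagonal_of_isCoprime i (φ.isCoprime_row_of_isCoprime_det hcop)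

theorem smith_form_lemma
    (R₀ R₁ : Type*) [CommRing R₀] [IsDomain R₀] [IsDiscreteValuationRing R₀]
    [CommRing R₁] [IsLocalRing R₁]
    [Algebra ℂ R₀] [Algebra ℂ R₁]
    (ζ : R₀) (hζ : Irreducible ζ)
    (ψ : (R₀ ⊗[ℂ] R₁) →+* R₁)
    (hψ : ∀ r : R₁, ψ ((1 : R₀) ⊗ₜ[ℂ] r) = r)
    (hker : RingHom.ker ψ = Ideal.span {ζ ⊗ₜ[ℂ] (1 : R₁)})
    (hnzd : (ζ ⊗ₜ[ℂ] (1 : R₁)) ∈ nonZeroDivisors (R₀ ⊗[ℂ] R₁))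
    (φ : Matrix (Fin 2) (Fin 2) (R₀ ⊗[ℂ] R₁))
    (hdet : φ.det = ζ ⊗ₜ[ℂ] (1 : R₁)) :
    ∃ P Q : Matrix (Fin 2) (Fin 2) (R₀ ⊗[ℂ] R₁),
      IsUnit P ∧ IsUnit Q ∧
      P * φ * Q = Matrix.diagonal ![1, ζ ⊗ₜ[ℂ] (1 : R₁)] :=
  smith_form_lemma_general R₀ R₁ ζ ψ hψ hker hnzd φ hdet
end

section
/- Let R₀ be a DVR over ℂ with uniformizer ζ, R₁ a local ℂ-algebra, R = R₀ ⊗_ℂ R₁, and φ = (φᵢⱼ) a 2×2 matrix over R with determinant ζ⊗1. Writing φᵢⱼ = 1⊗aᵢⱼ + (ζ⊗1)bᵢⱼ with aᵢⱼ ∈ R₁, then a₁₁a₂₂ − a₁₂a₂₁ = 0 and at least one of the four elements aᵢⱼ is a unit in R₁. -/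
/-!
Reducing `φ` modulo `ζ ⊗ 1` gives the matrix `a`, so `det a = ψ (ζ ⊗ 1) = 0`. Lifting `a` back
along `r ↦ 1 ⊗ r` gives `φ = A + z • B` with `z = ζ ⊗ 1` and `det A = 0`, hence
`z = det φ = z · (tr (adj A · B) + z · det B)`; cancelling the non-zero-divisor `z` yields
`tr (adj A · B) + z · det B = 1`. If every `aᵢⱼ` lay in the maximal ideal `𝔪` of `R₁`, the left side
would lie in the proper ideal `ψ⁻¹ 𝔪`.
-/

open TensorProduct

namespace Matrix

variable {R : Type*} [CommRing R]

theorem det_fin_two_add_smul (A B : Matrix (Fin 2) (Fin 2) R) (z : R) :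
    (A + z • B).det = A.det + z * ((adjugate A * B).trace + z * B.det) := by
  simp only [det_fin_two, adjugate_fin_two, trace_fin_two, mul_apply, Fin.sum_univ_two, add_apply,
    smul_apply, smul_eq_mul, of_apply, cons_val', cons_val_zero, cons_val_one, empty_val',
    cons_val_fin_one]
  ring

theorem trace_adjugate_mul_add_mul_det_eq_one {A B : Matrix (Fin 2) (Fin 2) R} {z : R}
    (hz : z ∈ nonZeroDivisors R) (hA : A.det = 0) (h : (A + z • B).det = z) :
    (adjugate A * B).trace + z * B.det = 1 := by
  rw [det_fin_two_add_smul, hA, zero_add] at h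
  exact (mul_cancel_left_mem_nonZeroDivisors hz).mp (h.trans (mul_one z).symm)

theorem trace_adjugate_mul_mem {J : Ideal R} {A : Matrix (Fin 2) (Fin 2) R}
    (hA : ∀ i j, A i j ∈ J) (B : Matrix (Fin 2) (Fin 2) R) : (adjugate A * B).trace ∈ J := by
  simp only [adjugate_fin_two, trace_fin_two, mul_apply, Fin.sum_univ_two, of_apply, cons_val',
    cons_val_zero, cons_val_one, empty_val', cons_val_fin_one, neg_mul]
  exact J.add_mem (J.add_mem (J.mul_mem_right _ (hA 1 1)) (J.neg_mem (J.mul_mem_right _ (hA 0 1))))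
    (J.add_mem (J.neg_mem (J.mul_mem_right _ (hA 1 0))) (J.mul_mem_right _ (hA 0 0)))

theorem exists_notMem_of_trace_adjugate_mul_add_mul_det_eq_one {J : Ideal R} (hJ : J ≠ ⊤)
    {A B : Matrix (Fin 2) (Fin 2) R} {z : R} (hz : z ∈ J)
    (h : (adjugate A * B).trace + z * B.det = 1) : ∃ i j, A i j ∉ J := by
  by_contra! hA
  exact hJ ((Ideal.eq_top_iff_one J).mpr
    (h ▸ J.add_mem (trace_adjugate_mul_mem hA B) (J.mul_mem_right _ hz)))

end Matrix

theorem det_residue_lemma_general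
    (R₀ R₁ : Type*) [CommRing R₀]
    [CommRing R₁] [IsLocalRing R₁]
    [Algebra ℂ R₀] [Algebra ℂ R₁]
    (ζ : R₀)
    (ψ : (R₀ ⊗[ℂ] R₁) →+* R₁)
    (hψ : ∀ r : R₁, ψ ((1 : R₀) ⊗ₜ[ℂ] r) = r)
    (hker : RingHom.ker ψ = Ideal.span {ζ ⊗ₜ[ℂ] (1 : R₁)})
    (hnzd : (ζ ⊗ₜ[ℂ] (1 : R₁)) ∈ nonZeroDivisors (R₀ ⊗[ℂ] R₁))
    (φ : Matrix (Fin 2) (Fin 2) (R₀ ⊗[ℂ] R₁))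
    (hdet : φ.det = ζ ⊗ₜ[ℂ] (1 : R₁))
    (a : Fin 2 → Fin 2 → R₁) (b : Fin 2 → Fin 2 → (R₀ ⊗[ℂ] R₁))
    (hab : ∀ i j, φ i j = (1 : R₀) ⊗ₜ[ℂ] (a i j) + (ζ ⊗ₜ[ℂ] (1 : R₁)) * b i j) :
    a 0 0 * a 1 1 - a 0 1 * a 1 0 = 0 ∧ ∃ i j, IsUnit (a i j) := by
  set z := ζ ⊗ₜ[ℂ] (1 : R₁)
  have hψz : ψ z = 0 := by
    rw [← RingHom.mem_ker, hker]
    exact Ideal.mem_span_singleton_self z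
  let ι : R₁ →ₐ[ℂ] R₀ ⊗[ℂ] R₁ := Algebra.TensorProduct.includeRight
  let A := (Matrix.of a).map ι
  have hψA : ∀ i j, ψ (A i j) = a i j := fun i j => hψ (a i j)
  have hφ : φ = A + z • Matrix.of b := by
    ext i j
    exact hab i j
  have hdet_a : (Matrix.of a).det = 0 := by
    have : ψ.mapMatrix φ = Matrix.of a := by
      ext i j
      simp [hab, hψz, hψ]
    rw [← this, ← RingHom.map_det, hdet, hψz]
  refine ⟨by rwa [Matrix.det_fin_two] at hdet_a, ?_⟩
  have hA : A.det = 0 := by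
    rw [← map_zero ι, ← hdet_a]
    exact (AlgHom.map_det _ _).symm
  have hone := Matrix.trace_adjugate_mul_add_mul_det_eq_one hnzd hA (hφ ▸ hdet)
  obtain ⟨i, j, hij⟩ := Matrix.exists_notMem_of_trace_adjugate_mul_add_mul_det_eq_one
    (Ideal.comap_ne_top ψ (IsLocalRing.maximalIdeal.isMaximal R₁).ne_top)
    (by rw [Ideal.mem_comap, hψz]; exact zero_mem _) hone
  refine ⟨i, j, ?_⟩
  rwa [Ideal.mem_comap, hψA, IsLocalRing.mem_maximalIdeal, mem_nonunits_iff, not_not] at hij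

theorem det_residue_lemma
    (R₀ R₁ : Type*) [CommRing R₀] [IsDomain R₀] [IsDiscreteValuationRing R₀]
    [CommRing R₁] [IsLocalRing R₁]
    [Algebra ℂ R₀] [Algebra ℂ R₁]
    (ζ : R₀) (hζ : Irreducible ζ)
    (ψ : (R₀ ⊗[ℂ] R₁) →+* R₁)
    (hψ : ∀ r : R₁, ψ ((1 : R₀) ⊗ₜ[ℂ] r) = r)
    (hker : RingHom.ker ψ = Ideal.span {ζ ⊗ₜ[ℂ] (1 : R₁)})
    (hnzd : (ζ ⊗ₜ[ℂ] (1 : R₁)) ∈ nonZeroDivisors (R₀ ⊗[ℂ] R₁))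
    (φ : Matrix (Fin 2) (Fin 2) (R₀ ⊗[ℂ] R₁))
    (hdet : φ.det = ζ ⊗ₜ[ℂ] (1 : R₁))
    (a : Fin 2 → Fin 2 → R₁) (b : Fin 2 → Fin 2 → (R₀ ⊗[ℂ] R₁))
    (hab : ∀ i j, φ i j = (1 : R₀) ⊗ₜ[ℂ] (a i j) + (ζ ⊗ₜ[ℂ] (1 : R₁)) * b i j) :
    a 0 0 * a 1 1 - a 0 1 * a 1 0 = 0 ∧ ∃ i j, IsUnit (a i j) :=
  det_residue_lemma_general R₀ R₁ ζ ψ hψ hker hnzd φ hdet a b hab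
end

section
/- For a free module E of rank 2 over a commutative ring, the canonical map φ_E : E* ⊗ Λ²E → E defined by ℓ ⊗ (s₁∧s₂) ↦ ℓ(s₂)s₁ − ℓ(s₁)s₂ is an isomorphism. -/
/-!
STATEMENT 3. For a free module `E` of rank 2 over a commutative ring, the canonical map
`φ_E : E* ⊗ Λ²E → E`, `ℓ ⊗ (s₁∧s₂) ↦ ℓ(s₂)s₁ − ℓ(s₁)s₂`, is an isomorphism.
-/

open TensorProduct

/-- The wedge `s ∧ t` as an element of the second exterior power `⋀[R]^2 M`. -/
def wedge (R M : Type*) [CommRing R] [AddCommGroup M] [Module R M] (s t : M) :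
    ⋀[R]^2 M :=
  ⟨ExteriorAlgebra.ιMulti R 2 ![s, t], ExteriorAlgebra.ιMulti_range R 2 ⟨![s, t], rfl⟩⟩


/-!
`⋀²E` is spanned by `b₀ ∧ b₁`, since every `s ∧ t` is `det(s, t) • (b₀ ∧ b₁)`. Hence
`ℓ ↦ ℓ ⊗ (b₀ ∧ b₁)` maps `E*` onto `E* ⊗ ⋀²E`, and composed with `φ` it becomes
`ℓ ↦ ℓ(b₁) b₀ - ℓ(b₀) b₁`, a bijection `E* → E`. So that surjection is also injective, and
`φ` is bijective.
-/

theorem AlternatingMap.eq_basis_det_smulRight {R M N ι : Type*} [CommRing R] [AddCommGroup M]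
    [Module R M] [AddCommGroup N] [Module R N] [Fintype ι] [DecidableEq ι]
    (e : Module.Basis ι R M) (f : M [⋀^ι]→ₗ[R] N) : f = e.det.smulRight (f e) := by
  refine e.ext_alternating fun i hi => ?_
  let σ : Equiv.Perm ι := Equiv.ofBijective i (Finite.injective_iff_bijective.1 hi)
  change f (e ∘ σ) = e.det (e ∘ σ) • f e
  simp [AlternatingMap.map_perm, Module.Basis.det_self]

theorem TensorProduct.tmul_surjective_of_span_singleton_eq_top {R N P : Type*} [CommRing R]
    [AddCommGroup N] [Module R N] [AddCommGroup P] [Module R P] {w : P}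
    (hw : Submodule.span R {w} = ⊤) : Function.Surjective fun n : N => n ⊗ₜ[R] w := by
  have hspan : Function.Surjective (LinearMap.toSpanSingleton R P w) := by
    rw [← LinearMap.range_eq_top, LinearMap.range_toSpanSingleton, hw]
  convert (LinearMap.lTensor_surjective N hspan).comp (TensorProduct.rid R N).symm.surjective
  simp

section Basis

variable {R M : Type*} [CommRing R] [AddCommGroup M] [Module R M]

theorem exteriorPower.span_singleton_ιMulti_basis_eq_top {n : ℕ} (b : Module.Basis (Fin n) R M) :
    Submodule.span R {exteriorPower.ιMulti R n ⇑b} = ⊤ := by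
  rw [eq_top_iff, ← exteriorPower.ιMulti_span, Submodule.span_le]
  rintro _ ⟨v, rfl⟩
  have hv := DFunLike.congr_fun
    (AlternatingMap.eq_basis_det_smulRight b (exteriorPower.ιMulti R n)) v
  exact Submodule.mem_span_singleton.2 ⟨b.det v, hv.symm⟩

theorem wedge_basis_eq_ιMulti (b : Module.Basis (Fin 2) R M) :
    wedge R M (b 0) (b 1) = exteriorPower.ιMulti R 2 ⇑b := by
  have hb : ![b 0, b 1] = ⇑b := by
    ext i
    fin_cases i <;> rfl
  rw [← hb]
  rfl

theorem Module.Basis.bijective_dual_rotate (b : Module.Basis (Fin 2) R M) :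
    Function.Bijective fun ℓ : Module.Dual R M => ℓ (b 1) • b 0 - ℓ (b 0) • b 1 := by
  constructor
  · intro ℓ ℓ' h
    have h1 : ℓ (b 1) = ℓ' (b 1) := by simpa using congrArg (b.repr · 0) h
    have h0 : ℓ (b 0) = ℓ' (b 0) := by simpa using congrArg (b.repr · 1) h
    exact b.ext (Fin.forall_fin_two.2 ⟨h0, h1⟩)
  · intro v
    refine ⟨b.repr v 0 • b.coord 1 - b.repr v 1 • b.coord 0, ?_⟩
    conv_rhs => rw [← b.sum_repr v, Fin.sum_univ_two]
    simp

end Basis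

theorem phi_bijective_of_rank_two
    {R M : Type*} [CommRing R] [AddCommGroup M] [Module R M]
    (b : Module.Basis (Fin 2) R M)
    (φ : Module.Dual R M ⊗[R] (⋀[R]^2 M) →ₗ[R] M)
    (hφ : ∀ (ℓ : Module.Dual R M) (s t : M),
      φ (ℓ ⊗ₜ[R] wedge R M s t) = ℓ t • s - ℓ s • t) :
    Function.Bijective φ := by
  set j := fun ℓ : Module.Dual R M => ℓ ⊗ₜ[R] wedge R M (b 0) (b 1)
  have hj : Function.Surjective j :=
    TensorProduct.tmul_surjective_of_span_singleton_eq_top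
      (wedge_basis_eq_ιMulti b ▸ exteriorPower.span_singleton_ιMulti_basis_eq_top b)
  have hφj : Function.Bijective (φ ∘ j) := by
    convert b.bijective_dual_rotate using 1
    exact funext fun ℓ => hφ ℓ (b 0) (b 1)
  exact ⟨hφj.injective.of_comp_right hj, hφj.surjective.of_comp⟩
end

section
/- Let E be a free module of rank 2 over a commutative ring S, L₀ and L₁ free modules of rank 1, ε = ε₁ ⊕ ε₂ : E → L₀³⊗L₁ ⊕ L₁ a module map, and a : L₀ ≅ Λ²E an isomorphism. Define f : L₀⁻²⊗L₁⁻¹ → E as the composite (−ε₁ᵗ ⊗ a) followed by the canonical map φ_E : E*⊗Λ²E → E. Then Λ²ε ∘ a = ε₂ ∘ f as maps L₀ → Λ²(L₀³L₁ ⊕ L₁) ≅ L₀³L₁² (equivalently: in local trivializing bases, if ε has matrix (εᵢⱼ) then ε₂∘f is multiplication by det(εᵢⱼ)). -/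
/-!
In trivializing bases, with the trivialization of `L₀` chosen so that `a` sends its
generator to `b 0 ∧ b 1`, the components `ε₁, ε₂ : E → S` are dual vectors,
`f = φ_E ((−ε₁) ⊗ (b 0 ∧ b 1))`, and `Λ²ε ∘ a` is multiplication by `det (εᵢⱼ)`.
Expanding `φ_E` gives `ε₂ (f) = ε₁ (b 0) ε₂ (b 1) − ε₁ (b 1) ε₂ (b 0)`.
-/

open TensorProduct

theorem det_lemma
    {S E : Type*} [CommRing S] [AddCommGroup E] [Module S E]
    (b : Module.Basis (Fin 2) S E)
    (ε₁ ε₂ : E →ₗ[S] S)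
    (φ : Module.Dual S E ⊗[S] (⋀[S]^2 E) →ₗ[S] E)
    (hφ : ∀ (ℓ : Module.Dual S E) (s t : E),
      φ (ℓ ⊗ₜ[S] wedge S E s t) = ℓ t • s - ℓ s • t) :
    ε₂ (φ ((-ε₁) ⊗ₜ[S] wedge S E (b 0) (b 1))) =
      Matrix.det !![ε₁ (b 0), ε₁ (b 1); ε₂ (b 0), ε₂ (b 1)] := by
  rw [hφ, Matrix.det_fin_two_of]
  simp only [LinearMap.neg_apply, neg_smul, map_sub, map_neg, map_smul, smul_eq_mul]
  ring
end

section
/- Combinatorial core of stability: with N, n, J₁, J₂ as above, there exist r ≥ 1 and integers (m₁,…,m_N) with 0 ≤ mⱼ ≤ Nr, mⱼ = Nr exactly on a set J̃₁ ⊇ J₁, mⱼ = 0 exactly on a set J̃₂ ⊇ J₂, Σⱼ mⱼ = Nnr, and |J̃₁| + |J̃₂| < N, if and only if |J₁| < n and |J₂| < N−n. -/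
/-!
If a profile `m` with values in `[0, M]` has sum `s * M` and some entry strictly between `0` and
`M` (there is one as soon as `#{m = M} + #{m = 0}` is less than the number of entries), then
comparing the sum with `M` times the number of entries equal to `M`, and with `M` times the number
of nonzero entries, gives `#{m = M} < s < #{m ≠ 0}`. Conversely, put `M = N r` on `J₁`, `0` on
`J₂` and one intermediate value on the `r` remaining indices; the sum is `N n r` exactly when that
value is `N (n - |J₁|)`, which lies strictly between `0` and `N r` by the two inequalities.
-/

open Finset

section Counting

variable {ι : Type*} [Fintype ι] {m : ι → ℕ} {M : ℕ}

theorem exists_ne_and_ne_zero_of_card_add_card_lt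
    (h : #{j | m j = M} + #{j | m j = 0} < Fintype.card ι) : ∃ j, m j ≠ M ∧ m j ≠ 0 := by
  classical
  have hlt : #(({j | m j = M} : Finset ι) ∪ ({j | m j = 0} : Finset ι)) < #(univ : Finset ι) :=
    (card_union_le _ _).trans_lt h
  obtain ⟨j, -, hj⟩ := exists_mem_notMem_of_card_lt_card hlt
  exact ⟨j, by simpa [not_or] using hj⟩

theorem card_filter_eq_mul_lt_sum {j₀ : ι} (hM : m j₀ ≠ M) (h0 : m j₀ ≠ 0) :
    #{j | m j = M} * M < ∑ j, m j :=
  calc #{j | m j = M} * M = ∑ j ∈ {j | m j = M}, m j := (sum_const_nat (by simp)).symm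
    _ < ∑ j, m j := sum_lt_sum_of_subset (subset_univ _) (mem_univ j₀) (by simpa using hM)
        (Nat.pos_of_ne_zero h0) (fun _ _ _ => Nat.zero_le _)

theorem sum_lt_card_filter_ne_zero_mul (hm : ∀ j, m j ≤ M) {j₀ : ι} (hM : m j₀ ≠ M)
    (h0 : m j₀ ≠ 0) : ∑ j, m j < #{j | m j ≠ 0} * M :=
  calc ∑ j, m j = ∑ j ∈ {j | m j ≠ 0}, m j := (sum_filter_ne_zero _).symm
    _ < ∑ j ∈ {j | m j ≠ 0}, M :=
        sum_lt_sum (fun j _ => hm j) ⟨j₀, by simpa using h0, (hm j₀).lt_of_ne hM⟩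
    _ = #{j | m j ≠ 0} * M := by rw [sum_const, smul_eq_mul]

theorem card_filter_eq_lt_and_card_filter_eq_zero_lt (hm : ∀ j, m j ≤ M)
    (hcard : #{j | m j = M} + #{j | m j = 0} < Fintype.card ι) {s : ℕ}
    (hsum : ∑ j, m j = s * M) :
    #{j | m j = M} < s ∧ #{j | m j = 0} < Fintype.card ι - s := by
  obtain ⟨j₀, hM, h0⟩ := exists_ne_and_ne_zero_of_card_add_card_lt hcard
  have hlow : #{j | m j = M} < s :=
    Nat.lt_of_mul_lt_mul_right (hsum ▸ card_filter_eq_mul_lt_sum hM h0)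
  have hhigh : s < #{j | m j ≠ 0} :=
    Nat.lt_of_mul_lt_mul_right (hsum ▸ sum_lt_card_filter_ne_zero_mul hm hM h0)
  have hsplit : #{j | m j = 0} + #{j | m j ≠ 0} = Fintype.card ι :=
    card_filter_add_card_filter_not _
  omega

end Counting

section StepProfile

variable {ι : Type*} [DecidableEq ι] {J₁ J₂ : Finset ι} {top mid : ℕ}

def stepProfile (J₁ J₂ : Finset ι) (top mid : ℕ) (j : ι) : ℕ :=
  if j ∈ J₁ then top else if j ∈ J₂ then 0 else mid

theorem stepProfile_le (h : mid ≤ top) (j : ι) : stepProfile J₁ J₂ top mid j ≤ top := by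
  unfold stepProfile; split_ifs <;> omega

variable [Fintype ι]

theorem filter_stepProfile_eq_top (h0 : 0 < top) (h : mid < top) :
    ({j | stepProfile J₁ J₂ top mid j = top} : Finset ι) = J₁ := by
  ext j
  rw [mem_filter]
  by_cases h₁ : j ∈ J₁ <;> by_cases h₂ : j ∈ J₂ <;>
    simp [stepProfile, h₁, h₂, h0.ne, h.ne]

theorem filter_stepProfile_eq_zero (hdisj : Disjoint J₁ J₂) (h0 : 0 < top) (h : 0 < mid) :
    ({j | stepProfile J₁ J₂ top mid j = 0} : Finset ι) = J₂ := by
  ext j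
  rw [mem_filter]
  by_cases h₁ : j ∈ J₁
  · simp [stepProfile, h₁, disjoint_left.mp hdisj h₁, h0.ne']
  · by_cases h₂ : j ∈ J₂ <;> simp [stepProfile, h₁, h₂, h.ne']

theorem sum_stepProfile :
    ∑ j, stepProfile J₁ J₂ top mid j = #J₁ * top + #(J₁ ∪ J₂)ᶜ * mid := by
  simp only [stepProfile, sum_ite, sum_const_zero, sum_const, smul_eq_mul, filter_filter, zero_add,
    filter_mem_eq_inter, univ_inter, compl_union, ← not_or]
  congr 3
  ext j; simp

end StepProfile

theorem stability_combinatorics_general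
    (N n : ℕ) (J₁ J₂ : Finset (Fin N)) (hdisj : Disjoint J₁ J₂) :
    (∃ r : ℕ, 1 ≤ r ∧ ∃ m : Fin N → ℕ,
      (∀ j, m j ≤ N * r) ∧
      J₁ ⊆ Finset.univ.filter (fun j => m j = N * r) ∧
      J₂ ⊆ Finset.univ.filter (fun j => m j = 0) ∧
      ∑ j, m j = N * n * r ∧
      (Finset.univ.filter (fun j => m j = N * r)).card
        + (Finset.univ.filter (fun j => m j = 0)).card < N) ↔
    (J₁.card < n ∧ J₂.card < N - n) := by
  constructor
  · rintro ⟨r, -, m, hm, hJ₁, hJ₂, hsum, hcard⟩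
    have key := card_filter_eq_lt_and_card_filter_eq_zero_lt (s := n) hm (by rwa [Fintype.card_fin])
      (hsum.trans (by ring))
    rw [Fintype.card_fin] at key
    have := card_le_card hJ₁
    have := card_le_card hJ₂
    omega
  · rintro ⟨h₁, h₂⟩
    set r := #(J₁ ∪ J₂)ᶜ with hr_def
    have hr : r = N - #J₁ - #J₂ := by
      rw [hr_def, card_compl, card_union_of_disjoint hdisj, Fintype.card_fin, Nat.sub_sub]
    obtain ⟨d, rfl⟩ := Nat.exists_eq_add_of_le h₁.le
    have hN : 0 < N := by omega
    have hd : 0 < N * d := Nat.mul_pos hN (by omega)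
    have hdr : N * d < N * r := Nat.mul_lt_mul_of_pos_left (by omega) hN
    have htop := filter_stepProfile_eq_top (J₁ := J₁) (J₂ := J₂) (hd.trans hdr) hdr
    have hzero := filter_stepProfile_eq_zero hdisj (hd.trans hdr) hd
    refine ⟨r, by omega, stepProfile J₁ J₂ (N * r) (N * d), stepProfile_le hdr.le,
      htop.symm.subset, hzero.symm.subset, ?_, ?_⟩
    · rw [sum_stepProfile, ← hr_def]; ring
    · rw [htop, hzero]; omega

theorem stability_combinatorics
    (N n : ℕ) (hN : 1 ≤ N) (hn0 : 0 < n) (hnN : n < N)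
    (J₁ J₂ : Finset (Fin N)) (hdisj : Disjoint J₁ J₂) :
    (∃ r : ℕ, 1 ≤ r ∧ ∃ m : Fin N → ℕ,
      (∀ j, m j ≤ N * r) ∧
      J₁ ⊆ Finset.univ.filter (fun j => m j = N * r) ∧
      J₂ ⊆ Finset.univ.filter (fun j => m j = 0) ∧
      ∑ j, m j = N * n * r ∧
      (Finset.univ.filter (fun j => m j = N * r)).card
        + (Finset.univ.filter (fun j => m j = 0)).card < N) ↔
    (J₁.card < n ∧ J₂.card < N - n) :=
  stability_combinatorics_general N n J₁ J₂ hdisj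
end

section
/- Local model of the μ constructed in the Smith-form lemma: let R be a commutative ring, ζ ∈ R a non-zero-divisor, and φ = ((φ₁₁,φ₁₂),(φ₂₁,φ₂₂)) a 2×2 matrix over R with det φ = ζ. Suppose φᵢⱼ = aᵢⱼ + ζbᵢⱼ where each aᵢⱼ lies in a subring mapping isomorphically onto R/(ζ), a₁₁a₂₂ = a₁₂a₂₁, and a₁₁ is a unit. Then with P = ((1,0),(a₂₁,−a₁₁)), the matrix Pφ has second row divisible by ζ, and Pφ = diag(1,ζ)·Q⁻¹ for some invertible 2×2 matrix Q⁻¹ over R. -/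
/-!
Writing `φ = a + ζ b` entrywise, the second row of `Pφ` is `a₂₁ · (row 1 of φ) − a₁₁ · (row 2 of φ)`;
its `a`-part is `(a₂₁a₁₁ − a₁₁a₂₁, a₂₁a₁₂ − a₁₁a₂₂) = 0`, so it equals `ζ (c₁, c₂)` with
`cⱼ = a₂₁b₁ⱼ − a₁₁b₂ⱼ`. Hence `Pφ = diag(1, ζ) Q` with `Q` having rows `(φ₁₁, φ₁₂)` and `(c₁, c₂)`.
Comparing determinants, `ζ det Q = det P · det φ = −a₁₁ ζ`, and cancelling the non-zero-divisor `ζ`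
gives `det Q = −a₁₁`, a unit.
-/

open Matrix

section RowReduction

variable {R : Type*} [CommRing R]

lemma sub_mul_eq_mul_of_mul_eq_mul {ζ x y φ₀ φ₁ a₀ a₁ b₀ b₁ : R}
    (hφ₀ : φ₀ = a₀ + ζ * b₀) (hφ₁ : φ₁ = a₁ + ζ * b₁) (ha : x * a₀ = y * a₁) :
    x * φ₀ - y * φ₁ = ζ * (x * b₀ - y * b₁) := by
  subst hφ₀ hφ₁
  linear_combination ha

lemma of_one_zero_mul_apply_one (x y : R) (φ : Matrix (Fin 2) (Fin 2) R) (j : Fin 2) :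
    (!![1, 0; x, y] * φ) 1 j = x * φ 0 j + y * φ 1 j := by
  simp [mul_apply, Fin.sum_univ_two]

lemma eq_diagonal_one_mul_of_row_one_eq (ζ : R) (M : Matrix (Fin 2) (Fin 2) R) (c : Fin 2 → R)
    (hc : ∀ j, M 1 j = ζ * c j) :
    M = diagonal ![1, ζ] * of ![M 0, c] := by
  ext i j
  fin_cases i <;> simp [hc]

lemma det_diagonal_one_mul (ζ : R) (Q : Matrix (Fin 2) (Fin 2) R) :
    (diagonal ![1, ζ] * Q).det = ζ * Q.det := by
  simp [det_mul, det_diagonal, Fin.prod_univ_two]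

lemma isUnit_of_det_diagonal_one_mul_eq {ζ u : R} (hζ : ζ ∈ nonZeroDivisors R) (hu : IsUnit u)
    {Q : Matrix (Fin 2) (Fin 2) R} (h : (diagonal ![1, ζ] * Q).det = ζ * u) : IsUnit Q := by
  rw [det_diagonal_one_mul, mul_cancel_left_mem_nonZeroDivisors hζ] at h
  rwa [isUnit_iff_isUnit_det, h]

end RowReduction

theorem smith_form_local_model_general
    {R : Type*} [CommRing R]
    (ζ : R) (hζ : ζ ∈ nonZeroDivisors R)
    (φ : Matrix (Fin 2) (Fin 2) R) (hdet : φ.det = ζ)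
    (a b : Fin 2 → Fin 2 → R)
    (hab : ∀ i j, φ i j = a i j + ζ * b i j)
    (h0 : a 0 0 * a 1 1 = a 0 1 * a 1 0)
    (hu : IsUnit (a 0 0)) :
    (∃ c₁ c₂ : R,
      ((!![1, 0; a 1 0, -(a 0 0)] : Matrix (Fin 2) (Fin 2) R) * φ) 1 0 = ζ * c₁ ∧
      ((!![1, 0; a 1 0, -(a 0 0)] : Matrix (Fin 2) (Fin 2) R) * φ) 1 1 = ζ * c₂) ∧
    (∃ Qinv : Matrix (Fin 2) (Fin 2) R, IsUnit Qinv ∧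
      (!![1, 0; a 1 0, -(a 0 0)] : Matrix (Fin 2) (Fin 2) R) * φ =
        Matrix.diagonal ![1, ζ] * Qinv) := by
  set M := (!![1, 0; a 1 0, -(a 0 0)] : Matrix (Fin 2) (Fin 2) R) * φ with hM
  set c : Fin 2 → R := fun j ↦ a 1 0 * b 0 j - a 0 0 * b 1 j
  have ha : ∀ j, a 1 0 * a 0 j = a 0 0 * a 1 j :=
    Fin.forall_fin_two.mpr ⟨mul_comm _ _, (mul_comm _ _).trans h0.symm⟩
  have hc : ∀ j, M 1 j = ζ * c j := by
    intro j
    rw [hM, of_one_zero_mul_apply_one, neg_mul, ← sub_eq_add_neg]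
    exact sub_mul_eq_mul_of_mul_eq_mul (hab 0 j) (hab 1 j) (ha j)
  have hMQ := eq_diagonal_one_mul_of_row_one_eq ζ M c hc
  have hdetM : (diagonal ![1, ζ] * of ![M 0, c]).det = ζ * -a 0 0 := by
    rw [← hMQ, hM, det_mul, hdet, det_fin_two_of]
    ring
  exact ⟨⟨c 0, c 1, hc 0, hc 1⟩,
    of ![M 0, c], isUnit_of_det_diagonal_one_mul_eq hζ hu.neg hdetM, hMQ⟩

theorem smith_form_local_model
    {R : Type*} [CommRing R]
    (ζ : R) (hζ : ζ ∈ nonZeroDivisors R)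
    (φ : Matrix (Fin 2) (Fin 2) R) (hdet : φ.det = ζ)
    (a b : Fin 2 → Fin 2 → R)
    (hab : ∀ i j, φ i j = a i j + ζ * b i j)
    (S : Subring R) (haS : ∀ i j, a i j ∈ S)
    (hiso : Function.Bijective ((Ideal.Quotient.mk (Ideal.span {ζ})).comp S.subtype))
    (h0 : a 0 0 * a 1 1 = a 0 1 * a 1 0)
    (hu : IsUnit (a 0 0)) :
    (∃ c₁ c₂ : R,
      ((!![1, 0; a 1 0, -(a 0 0)] : Matrix (Fin 2) (Fin 2) R) * φ) 1 0 = ζ * c₁ ∧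
      ((!![1, 0; a 1 0, -(a 0 0)] : Matrix (Fin 2) (Fin 2) R) * φ) 1 1 = ζ * c₂) ∧
    (∃ Qinv : Matrix (Fin 2) (Fin 2) R, IsUnit Qinv ∧
      (!![1, 0; a 1 0, -(a 0 0)] : Matrix (Fin 2) (Fin 2) R) * φ =
        Matrix.diagonal ![1, ζ] * Qinv) :=
  smith_form_local_model_general ζ hζ φ hdet a b hab h0 hu
end
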